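/- With ψ and ω as in the decomposition lemmas (ψ = −f e^{123} + e^1∧a^{23} + e^2∧a^{31} + e^3∧a^{12}, ω = K_{ij} a^i∧e^j), the 2-form ω is of type (1,1) with respect to the almost complex structure J_ψ induced by ψ if and only if the matrix K = (K_{ij}) is symmetric. -/

import Mathlib

noncomputable section

/-- `ℝ^6 ≅ ℂ³`; the coframe `{a^i}` plays the role of `{w^i} = {Im dz^i}` and `{e^i}`
the role of `{v^i} = {Re dz^i}` in the normal form of the decomposition lemmas. -/
abbrev V3 : Type := Fin 3 → ℂ

/-- `v^j = Re dz^j`. -/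
def vco (j : Fin 3) (x : V3) : ℝ := (x j).re

/-- `w^i = Im dz^i`. -/
def wco (i : Fin 3) (x : V3) : ℝ := (x i).im

/-- The 2-form `ω = Σ_{i,j} K_{ij} w^i ∧ v^j` (i.e. `Σ K_{ij} a^i ∧ e^j`), evaluated on
a pair of tangent vectors. -/
def omegaK (K : Matrix (Fin 3) (Fin 3) ℝ) (x y : V3) : ℝ :=
  ∑ i : Fin 3, ∑ j : Fin 3, K i j * (wco i x * vco j y - vco j x * wco i y)

/-!
`J₀` maps `w^i` to `v^i` and `v^i` to `-w^i`, so pulling `ω_K = Σ K_{ij} w^i ∧ v^j` back by `J₀`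
gives `Σ K_{ij} v^i ∧ (-w^j) = Σ K_{ji} w^i ∧ v^j = ω_{Kᵀ}`. Since `K ↦ ω_K` is injective
(`ω_K(i e_i, e_j) = K_{ij}`), `ω_K` is `J₀`-invariant exactly when `Kᵀ = K`.
-/

@[simp]
lemma wco_I_smul (i : Fin 3) (x : V3) : wco i (Complex.I • x) = vco i x := by
  simp [wco, vco]

@[simp]
lemma vco_I_smul (j : Fin 3) (x : V3) : vco j (Complex.I • x) = -wco j x := by
  simp [wco, vco]

lemma omegaK_I_smul (K : Matrix (Fin 3) (Fin 3) ℝ) (x y : V3) :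
    omegaK K (Complex.I • x) (Complex.I • y) = omegaK K.transpose x y := by
  simp only [omegaK, wco_I_smul, vco_I_smul, Matrix.transpose_apply]
  rw [Finset.sum_comm]
  refine Finset.sum_congr rfl fun i _ => Finset.sum_congr rfl fun j _ => ?_
  ring

lemma omegaK_single_I_single (K : Matrix (Fin 3) (Fin 3) ℝ) (i j : Fin 3) :
    omegaK K (Pi.single i Complex.I) (Pi.single j 1) = K i j := by
  simp [omegaK, wco, vco, Pi.single_apply, apply_ite Complex.re, apply_ite Complex.im]

/-- the 2-form `ω = Σ K_{ij} a^i ∧ e^j` is of type `(1,1)` for the almost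
complex structure `J_ψ` induced by `ψ` — pointwise, for the standard `J₀` on
`(ℝ^6, J₀) ≅ ℂ³`, i.e. `ω(J₀·, J₀·) = ω(·,·)` — if and only if `K` is symmetric. -/
theorem stmt_11 (K : Matrix (Fin 3) (Fin 3) ℝ) :
    (∀ x y : V3, omegaK K (Complex.I • x) (Complex.I • y) = omegaK K x y) ↔ K.IsSymm := by
  constructor
  · refine fun h => Matrix.IsSymm.ext fun i j => ?_
    calc K j i = omegaK K.transpose (Pi.single i Complex.I) (Pi.single j 1) :=
          (omegaK_single_I_single K.transpose i j).symm
      _ = omegaK K (Pi.single i Complex.I) (Pi.single j 1) := by rw [← omegaK_I_smul, h]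
      _ = K i j := omegaK_single_I_single K i j
  · intro hK x y
    rw [omegaK_I_smul, hK.eq]
end
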